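/- Let Ω be a compact convex subset of ℝ³ with Lebesgue measure |Ω| > 0, let 0 < β < 1, κ > 0, δ > 0 and α > 0. Let H = L²(Ω) with Lebesgue measure, T : H → H a bounded linear operator, f^δ ∈ H, and let φ†, φ_α : ℝ³ → ℝ be continuously differentiable on a neighborhood of Ω and Lipschitz on Ω with constant κ, regarded as elements of H. Set K := (min_{x ∈ Ω} ‖∇φ_α(x)‖₂² + β)^{−1/2} and N := (∫_Ω ‖∇φ_α(x) − ∇φ†(x)‖₂² dx)^{1/2}. Assume: (i) ‖Tφ† − f^δ‖_{L²} ≤ δ; (ii) (1/2)‖Tφ_α − f^δ‖²_{L²} + α·J(φ_α) ≤ (1/2)‖Tφ† − f^δ‖²_{L²} + α·J(φ†); (iii) J(φ†) − J(φ_α) ≤ κ²|Ω|²·K·N; (iv) α ≤ δ²·K^{−1}/(2κ²|Ω|²). Then ‖Tφ_α − f^δ‖_{L²} ≤ δ·√(1 + N). -/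

import Mathlib

/-!
Minimality of `φ_α` for the Tikhonov functional gives
`‖Tφ_α - f^δ‖² ≤ ‖Tφ† - f^δ‖² + 2α (J(φ†) - J(φ_α)) ≤ δ² + 2α κ²|Ω|² K N`,
and the parameter choice `α ≤ δ² K⁻¹ / (2κ²|Ω|²)` is exactly what makes the penalty term
at most `δ² N`.
-/

open MeasureTheory

lemma sq_le_sq_add_of_tikhonov_le {a b δ α E J₀ J₁ : ℝ} (hα : 0 ≤ α) (hb : 0 ≤ b)
    (hbδ : b ≤ δ) (hmin : 1 / 2 * a ^ 2 + α * J₁ ≤ 1 / 2 * b ^ 2 + α * J₀)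
    (hJ : J₀ - J₁ ≤ E) :
    a ^ 2 ≤ δ ^ 2 + 2 * α * E := by
  have hb2 : b ^ 2 ≤ δ ^ 2 := pow_le_pow_left₀ hb hbδ 2
  nlinarith [mul_le_mul_of_nonneg_left hJ hα]

lemma mul_mul_le_of_le_mul_inv_div {α d w K : ℝ} (hw : 0 ≤ w) (hK : 0 ≤ K) (hd : 0 ≤ d)
    (hα : α ≤ d * K⁻¹ / w) :
    α * w * K ≤ d := by
  -- when `w * K = 0` the hypothesis is junk (`x / 0 = 0`), but then the left side vanishes
  rcases (mul_nonneg hw hK).eq_or_lt with hwK | hwK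
  · rw [mul_assoc, ← hwK, mul_zero]
    exact hd
  · rw [div_eq_mul_inv, mul_assoc, ← mul_inv, ← div_eq_mul_inv, mul_comm K,
      le_div_iff₀ hwK] at hα
    linarith

lemma le_mul_sqrt_of_sq_le_sq_mul {a d x : ℝ} (hd : 0 ≤ d) (h : a ^ 2 ≤ d ^ 2 * x) :
    a ≤ d * √x := by
  rw [← Real.sqrt_sq hd, ← Real.sqrt_mul (sq_nonneg d)]
  exact Real.le_sqrt_of_sq_le h

theorem stmt12_general (Ω : Set (EuclideanSpace ℝ (Fin 3)))
    (β κ δ α : ℝ) (hα : 0 < α)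
    (T : Lp ℝ 2 (volume.restrict Ω) →L[ℝ] Lp ℝ 2 (volume.restrict Ω))
    (fδ : Lp ℝ 2 (volume.restrict Ω))
    (φdag φα : EuclideanSpace ℝ (Fin 3) → ℝ)
    (hmd : MemLp φdag 2 (volume.restrict Ω)) (hma : MemLp φα 2 (volume.restrict Ω))
    (K N : ℝ)
    (hK : K = 1 / Real.sqrt (sInf ((fun x => ‖gradient φα x‖ ^ 2) '' Ω) + β))
    (hN : N = Real.sqrt (∫ x in Ω, ‖gradient φα x - gradient φdag x‖ ^ 2))
    (hnoise : ‖T (hmd.toLp φdag) - fδ‖ ≤ δ)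
    (hmin : 1 / 2 * ‖T (hma.toLp φα) - fδ‖ ^ 2 +
        α * ∫ x in Ω, Real.sqrt (‖gradient φα x‖ ^ 2 + β) ≤
      1 / 2 * ‖T (hmd.toLp φdag) - fδ‖ ^ 2 +
        α * ∫ x in Ω, Real.sqrt (‖gradient φdag x‖ ^ 2 + β))
    (hJdiff : (∫ x in Ω, Real.sqrt (‖gradient φdag x‖ ^ 2 + β)) -
        (∫ x in Ω, Real.sqrt (‖gradient φα x‖ ^ 2 + β)) ≤
      κ ^ 2 * (volume Ω).toReal ^ 2 * K * N)
    (hrule : α ≤ δ ^ 2 * K⁻¹ / (2 * κ ^ 2 * (volume Ω).toReal ^ 2)) :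
    ‖T (hma.toLp φα) - fδ‖ ≤ δ * Real.sqrt (1 + N) := by
  have hK0 : 0 ≤ K := hK ▸ by positivity
  have hN0 : 0 ≤ N := hN ▸ Real.sqrt_nonneg _
  have hδ0 : 0 ≤ δ := (norm_nonneg _).trans hnoise
  have hsq := sq_le_sq_add_of_tikhonov_le hα.le (norm_nonneg _) hnoise hmin hJdiff
  have hpenalty := mul_mul_le_of_le_mul_inv_div (by positivity) hK0 (sq_nonneg δ) hrule
  refine le_mul_sqrt_of_sq_le_sq_mul hδ0 ?_
  nlinarith [mul_le_mul_of_nonneg_right hpenalty hN0]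

/-- Discrepancy principle for smoothed-TV regularization: with
`H = L²(Ω)`, `K = (min_Ω ‖∇φ_α‖₂² + β)^{-1/2}`, `N = (∫_Ω ‖∇φ_α - ∇φ†‖₂²)^{1/2}`,
noise level `δ`, minimality of `φ_α` for the Tikhonov functional with smoothed-TV
penalty `J(w) = ∫_Ω √(‖∇w‖₂² + β)`, the bound `J(φ†) - J(φ_α) ≤ κ²|Ω|²·K·N`, and the
parameter choice `α ≤ δ²·K⁻¹/(2κ²|Ω|²)`, one gets `‖Tφ_α - f^δ‖ ≤ δ·√(1 + N)`. -/
theorem stmt12 (Ω : Set (EuclideanSpace ℝ (Fin 3)))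
    (hΩc : IsCompact Ω) (hΩconv : Convex ℝ Ω)
    (hΩpos : 0 < (volume Ω).toReal)
    (β κ δ α : ℝ) (hβ0 : 0 < β) (hβ1 : β < 1) (hκ : 0 < κ) (hδ : 0 < δ) (hα : 0 < α)
    (T : Lp ℝ 2 (volume.restrict Ω) →L[ℝ] Lp ℝ 2 (volume.restrict Ω))
    (fδ : Lp ℝ 2 (volume.restrict Ω))
    (φdag φα : EuclideanSpace ℝ (Fin 3) → ℝ)
    (Ud : Set (EuclideanSpace ℝ (Fin 3))) (hUd : IsOpen Ud) (hΩUd : Ω ⊆ Ud)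
    (hφdag : ContDiffOn ℝ 1 φdag Ud)
    (Ua : Set (EuclideanSpace ℝ (Fin 3))) (hUa : IsOpen Ua) (hΩUa : Ω ⊆ Ua)
    (hφα : ContDiffOn ℝ 1 φα Ua)
    (hlipd : ∀ x ∈ Ω, ∀ y ∈ Ω, |φdag x - φdag y| ≤ κ * ‖x - y‖)
    (hlipa : ∀ x ∈ Ω, ∀ y ∈ Ω, |φα x - φα y| ≤ κ * ‖x - y‖)
    (hmd : MemLp φdag 2 (volume.restrict Ω)) (hma : MemLp φα 2 (volume.restrict Ω))
    (K N : ℝ)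
    (hK : K = 1 / Real.sqrt (sInf ((fun x => ‖gradient φα x‖ ^ 2) '' Ω) + β))
    (hN : N = Real.sqrt (∫ x in Ω, ‖gradient φα x - gradient φdag x‖ ^ 2))
    (hnoise : ‖T (hmd.toLp φdag) - fδ‖ ≤ δ)
    (hmin : 1 / 2 * ‖T (hma.toLp φα) - fδ‖ ^ 2 +
        α * ∫ x in Ω, Real.sqrt (‖gradient φα x‖ ^ 2 + β) ≤
      1 / 2 * ‖T (hmd.toLp φdag) - fδ‖ ^ 2 +
        α * ∫ x in Ω, Real.sqrt (‖gradient φdag x‖ ^ 2 + β))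
    (hJdiff : (∫ x in Ω, Real.sqrt (‖gradient φdag x‖ ^ 2 + β)) -
        (∫ x in Ω, Real.sqrt (‖gradient φα x‖ ^ 2 + β)) ≤
      κ ^ 2 * (volume Ω).toReal ^ 2 * K * N)
    (hrule : α ≤ δ ^ 2 * K⁻¹ / (2 * κ ^ 2 * (volume Ω).toReal ^ 2)) :
    ‖T (hma.toLp φα) - fδ‖ ≤ δ * Real.sqrt (1 + N) :=
  stmt12_general Ω β κ δ α hα T fδ φdag φα hmd hma K N hK hN hnoise hmin hJdiff hrule
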